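/- arXiv:2208.08435 — 3 statements merged into one kernel-verified Lean document; each statement's English description precedes it below -/
import Mathlib

section
/- Fix naturals N ≥ 2, 1 ≤ N0 ≤ N, and a real ε > 0. Define, for λ_1 ∈ (0,1), the recursive sequence: Q_k = ∏_{j=1}^{k−1} (1 + √(1 − λ_j²))/2 and λ_k = [(1+ε)·(2^{N0(k−1)}/2^{N−2})·(2^{N−1} − 1 − f(Q_k))]^{1/N0}, where f(Q) = Σ_{θ=1}^{⌊N/2⌋} Σ_{t=max(0,2θ−N0)}^{min(2θ,N−N0)} C(N0,2θ−t)·C(N−N0,t)·Q^{2θ−t}. Then for every K ∈ ℕ there exists λ_1 ∈ (0,1) such that λ_k ∈ (0,1) for all k = 1, …, K. -/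
open Filter Topology Finset

/-- The hierarchical witness sum `f(Q)`. -/
noncomputable def witnessSum (N N0 : ℕ) (Q : ℝ) : ℝ :=
  ∑ θ ∈ Finset.Icc 1 (N / 2),
    ∑ t ∈ Finset.Icc (2 * θ - N0) (min (2 * θ) (N - N0)),
      (Nat.choose N0 (2 * θ - t) : ℝ) * (Nat.choose (N - N0) t : ℝ) * Q ^ (2 * θ - t)

namespace GMEAux

/-- Sum of even binomial coefficients. -/
lemma sum_choose_even (n : ℕ) (hn : 1 ≤ n) :
    ∑ θ ∈ Finset.range (n / 2 + 1), n.choose (2 * θ) = 2 ^ (n - 1) := by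
  have h1 : ∑ i ∈ range (n + 1), ((-1 : ℤ)) ^ i * n.choose i = 0 := by
    rw [Int.alternating_sum_range_choose, if_neg (by omega)]
  have h2 : ∑ i ∈ range (n + 1), (n.choose i : ℤ) = 2 ^ n := by
    exact_mod_cast congrArg (Nat.cast : ℕ → ℤ) (Nat.sum_range_choose n)
  have h3 : ∑ i ∈ range (n + 1), ((1 : ℤ) + (-1) ^ i) * n.choose i = 2 ^ n := by
    have := Finset.sum_add_distrib (s := range (n + 1))
      (f := fun i => (n.choose i : ℤ)) (g := fun i => ((-1 : ℤ)) ^ i * n.choose i)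
    calc ∑ i ∈ range (n + 1), ((1 : ℤ) + (-1) ^ i) * n.choose i
        = ∑ i ∈ range (n + 1), ((n.choose i : ℤ) + (-1) ^ i * n.choose i) := by
          apply Finset.sum_congr rfl; intro i _; ring
      _ = 2 ^ n := by rw [this, h1, h2, add_zero]
  have key : (range (n + 1)).filter (fun i => Even i)
      = (range (n / 2 + 1)).image (fun θ => 2 * θ) := by
    ext i
    simp only [Finset.mem_filter, Finset.mem_image, Finset.mem_range, Nat.lt_succ_iff,
      Nat.even_iff]
    constructor
    · rintro ⟨hle, hev⟩; exact ⟨i / 2, by omega, by omega⟩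
    · rintro ⟨θ, hθ, rfl⟩; omega
  have h4 : ∑ i ∈ range (n + 1), ((1 : ℤ) + (-1) ^ i) * n.choose i
      = ∑ θ ∈ range (n / 2 + 1), 2 * (n.choose (2 * θ) : ℤ) := by
    rw [← Finset.sum_filter_add_sum_filter_not (range (n + 1)) (fun i => Even i)]
    have hodd : ∑ i ∈ (range (n + 1)).filter (fun i => ¬ Even i),
        ((1 : ℤ) + (-1) ^ i) * n.choose i = 0 := by
      apply Finset.sum_eq_zero
      intro i hi
      simp only [Finset.mem_filter] at hi
      have : Odd i := Nat.not_even_iff_odd.mp hi.2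
      rw [this.neg_one_pow]; ring
    rw [hodd, add_zero, key, Finset.sum_image (by intro a _ b _ h; simp only at h; omega)]
    apply Finset.sum_congr rfl
    intro θ _
    rw [Even.neg_one_pow ⟨θ, by ring⟩]; ring
  have h5 : (2 : ℤ) * ∑ θ ∈ range (n / 2 + 1), (n.choose (2 * θ) : ℤ)
      = 2 * 2 ^ (n - 1) := by
    rw [Finset.mul_sum]
    have : (2 : ℤ) ^ n = 2 * 2 ^ (n - 1) := by
      rw [← pow_succ']
      congr 1
      omega
    rw [← this, ← h3, h4]
  have h6 := mul_left_cancel₀ (two_ne_zero (α := ℤ)) h5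
  exact_mod_cast h6

/-- Vandermonde for the inner sum. -/
lemma inner_sum (N N0 θ : ℕ) (h : N0 ≤ N) :
    ∑ t ∈ Finset.Icc (2 * θ - N0) (min (2 * θ) (N - N0)),
      N0.choose (2 * θ - t) * (N - N0).choose t = N.choose (2 * θ) := by
  have hsub : Finset.Icc (2 * θ - N0) (min (2 * θ) (N - N0)) ⊆ Finset.range (2 * θ + 1) := by
    intro t ht
    simp only [Finset.mem_Icc, Finset.mem_range] at *
    omega
  have h0 : ∀ t ∈ range (2 * θ + 1), t ∉ Finset.Icc (2 * θ - N0) (min (2 * θ) (N - N0)) →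
      N0.choose (2 * θ - t) * (N - N0).choose t = 0 := by
    intro t ht hnot
    simp only [Finset.mem_range] at ht
    simp only [Finset.mem_Icc, not_and_or, not_le] at hnot
    rcases hnot with hlt | hlt
    · have hx : N0 < 2 * θ - t := by omega
      rw [Nat.choose_eq_zero_of_lt hx, zero_mul]
    · have hx : N - N0 < t := by
        rcases min_lt_iff.mp hlt with h | h <;> omega
      rw [Nat.choose_eq_zero_of_lt hx, mul_zero]
  rw [Finset.sum_subset hsub h0]
  have hv : N.choose (2 * θ) = ∑ i ∈ Finset.range (2 * θ + 1),
      N0.choose i * (N - N0).choose (2 * θ - i) := by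
    conv_lhs => rw [show N = N0 + (N - N0) from by omega]
    rw [Nat.add_choose_eq, Finset.Nat.sum_antidiagonal_eq_sum_range_succ_mk]
  rw [hv, ← Finset.sum_range_reflect]
  apply Finset.sum_congr rfl
  intro t ht
  simp only [Finset.mem_range] at ht
  have e1 : 2 * θ + 1 - 1 - t = 2 * θ - t := by omega
  have e2 : 2 * θ - (2 * θ - t) = t := by omega
  rw [e1, e2]

lemma witnessSum_one (N N0 : ℕ) (hN : 2 ≤ N) (hN0N : N0 ≤ N) :
    witnessSum N N0 1 = (2 : ℝ) ^ (N - 1) - 1 := by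
  unfold witnessSum
  have : ∀ θ ∈ Finset.Icc 1 (N / 2),
      (∑ t ∈ Finset.Icc (2 * θ - N0) (min (2 * θ) (N - N0)),
        (Nat.choose N0 (2 * θ - t) : ℝ) * (Nat.choose (N - N0) t : ℝ) * (1 : ℝ) ^ (2 * θ - t))
      = (N.choose (2 * θ) : ℝ) := by
    intro θ _
    rw [← inner_sum N N0 θ hN0N]
    push_cast
    apply Finset.sum_congr rfl
    intro t _
    rw [one_pow, mul_one]
  rw [Finset.sum_congr rfl this]
  have hIcc : Finset.Icc 1 (N / 2) = Finset.range (N / 2 + 1) \ {0} := by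
    ext i; simp [Nat.lt_succ_iff]; omega
  have h0 : (0 : ℕ) ∈ Finset.range (N / 2 + 1) := by simp
  have := Finset.sum_sdiff_eq_sub (f := fun θ => (N.choose (2 * θ) : ℝ))
    (Finset.singleton_subset_iff.mpr h0)
  rw [hIcc, this]
  have hsum : ∑ θ ∈ Finset.range (N / 2 + 1), (N.choose (2 * θ) : ℝ)
      = (2 : ℝ) ^ (N - 1) := by
    have := sum_choose_even N (by omega)
    calc ∑ θ ∈ Finset.range (N / 2 + 1), (N.choose (2 * θ) : ℝ)
        = ((∑ θ ∈ Finset.range (N / 2 + 1), N.choose (2 * θ) : ℕ) : ℝ) := by push_cast; rfl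
      _ = (2 : ℝ) ^ (N - 1) := by rw [this]; push_cast; rfl
  rw [hsum]
  simp

lemma witnessSum_continuous (N N0 : ℕ) : Continuous (witnessSum N N0) := by
  unfold witnessSum
  exact continuous_finset_sum _ fun θ _ =>
    continuous_finset_sum _ fun t _ => (continuous_const.mul (continuous_pow _))

lemma witnessSum_lt (N N0 : ℕ) (hN : 2 ≤ N) (hN0 : 1 ≤ N0) (hN0N : N0 ≤ N)
    {q : ℝ} (hq0 : 0 ≤ q) (hq1 : q < 1) :
    witnessSum N N0 q < witnessSum N N0 1 := by
  unfold witnessSum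
  have hle : ∀ θ t : ℕ,
      (Nat.choose N0 (2 * θ - t) : ℝ) * (Nat.choose (N - N0) t : ℝ) * q ^ (2 * θ - t)
      ≤ (Nat.choose N0 (2 * θ - t) : ℝ) * (Nat.choose (N - N0) t : ℝ) * (1 : ℝ) ^ (2 * θ - t) := by
    intro θ t
    rw [one_pow]
    have h1 : q ^ (2 * θ - t) ≤ 1 := pow_le_one₀ hq0 hq1.le
    have h2 : (0 : ℝ) ≤ (Nat.choose N0 (2 * θ - t) : ℝ) * (Nat.choose (N - N0) t : ℝ) := by
      positivity
    nlinarith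
  apply Finset.sum_lt_sum
  · intro θ _
    exact Finset.sum_le_sum fun t _ => hle θ t
  · refine ⟨1, Finset.mem_Icc.mpr ⟨le_refl 1, by omega⟩, ?_⟩
    apply Finset.sum_lt_sum (fun t _ => hle 1 t)
    -- pick a witness t0
    rcases le_or_gt 2 N0 with h2 | h2
    · refine ⟨0, Finset.mem_Icc.mpr ⟨by omega, by omega⟩, ?_⟩
      have hc : (1 : ℝ) ≤ (Nat.choose N0 (2 * 1 - 0) : ℝ) * (Nat.choose (N - N0) 0 : ℝ) := by
        have := Nat.choose_pos (show 2 ≤ N0 by omega)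
        simp only [Nat.choose_zero_right, Nat.cast_one, mul_one]
        exact_mod_cast this
      have hq : q ^ (2 * 1 - 0) < 1 ^ (2 * 1 - 0) := by
        rw [one_pow]; exact pow_lt_one₀ hq0 hq1 (by omega)
      nlinarith [pow_nonneg hq0 (2 * 1 - 0)]
    · have hN0' : N0 = 1 := by omega
      refine ⟨1, Finset.mem_Icc.mpr ⟨by omega, by omega⟩, ?_⟩
      have hc : (1 : ℝ) ≤ (Nat.choose N0 (2 * 1 - 1) : ℝ) * (Nat.choose (N - N0) 1 : ℝ) := by
        have h1 : Nat.choose N0 (2 * 1 - 1) = 1 := by simp [hN0']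
        have h2 : 1 ≤ Nat.choose (N - N0) 1 := Nat.choose_pos (by omega)
        rw [h1]
        simp only [Nat.cast_one, one_mul]
        exact_mod_cast h2
      have hq : q ^ (2 * 1 - 1) < 1 ^ (2 * 1 - 1) := by
        rw [one_pow]; exact pow_lt_one₀ hq0 hq1 (by omega)
      nlinarith [pow_nonneg hq0 (2 * 1 - 1)]

noncomputable def fac (l : ℝ) : ℝ := (1 + Real.sqrt (1 - l ^ 2)) / 2

lemma fac_pos (l : ℝ) : 0 < fac l := by
  unfold fac
  have := Real.sqrt_nonneg (1 - l ^ 2)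
  linarith

lemma fac_le_one (l : ℝ) : fac l ≤ 1 := by
  unfold fac
  have : Real.sqrt (1 - l ^ 2) ≤ 1 := Real.sqrt_le_one.mpr (by nlinarith [sq_nonneg l])
  linarith

lemma fac_lt_one {l : ℝ} (hl : 0 < l) : fac l < 1 := by
  unfold fac
  have : Real.sqrt (1 - l ^ 2) < 1 := by
    rw [Real.sqrt_lt' one_pos]
    nlinarith
  linarith

lemma fac_zero : fac 0 = 1 := by
  unfold fac
  norm_num

lemma fac_continuous : Continuous fac := by
  unfold fac
  exact (continuous_const.add (Real.continuous_sqrt.comp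
    (continuous_const.sub (continuous_pow 2)))).div_const 2

noncomputable def gfun (N N0 : ℕ) (ε : ℝ) (k : ℕ) (q : ℝ) : ℝ :=
  ((1 + ε) * (2 ^ (N0 * (k - 1)) / 2 ^ (N - 2)) *
      ((2 : ℝ) ^ (N - 1) - 1 - witnessSum N N0 q)) ^ ((1 : ℝ) / N0)

noncomputable def S (N N0 : ℕ) (ε x : ℝ) : ℕ → ℝ × ℝ
  | 0 => (x, 1)
  | 1 => (x, 1)
  | (k + 2) =>
      (gfun N N0 ε (k + 2) ((S N N0 ε x (k + 1)).2 * fac ((S N N0 ε x (k + 1)).1)),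
        (S N N0 ε x (k + 1)).2 * fac ((S N N0 ε x (k + 1)).1))

lemma S_snd_eq_prod (N N0 : ℕ) (ε x : ℝ) :
    ∀ k, (S N N0 ε x (k + 1)).2 = ∏ j ∈ Finset.Icc 1 k, fac ((S N N0 ε x j).1) := by
  intro k
  induction k with
  | zero => simp [S]
  | succ m ih =>
      show (S N N0 ε x (m + 1)).2 * fac ((S N N0 ε x (m + 1)).1) = _
      rw [ih, Finset.prod_Icc_succ_top (by omega : 1 ≤ m + 1)]

lemma lam_eq (N N0 : ℕ) (ε x : ℝ) (lam : ℕ → ℝ) (h1 : lam 1 = x)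
    (hrec : ∀ k, 2 ≤ k →
      lam k = gfun N N0 ε k (∏ j ∈ Finset.Icc 1 (k - 1), fac (lam j))) :
    ∀ k, 1 ≤ k → lam k = (S N N0 ε x k).1 := by
  have main : ∀ k, ∀ j, j ≤ k → 1 ≤ j → lam j = (S N N0 ε x j).1 := by
    intro k
    induction k with
    | zero => intro j h1' h2'; omega
    | succ m ih =>
        intro j hj hj1
        rcases Nat.lt_or_ge j (m + 1) with h | h
        · exact ih j (by omega) hj1
        · have hjm : j = m + 1 := by omega
          subst hjm
          rcases Nat.lt_or_ge m 1 with hm | hm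
          · interval_cases m
            exact h1
          · obtain ⟨p, hp⟩ : ∃ p, m = p + 1 := ⟨m - 1, by omega⟩
            subst hp
            rw [hrec (p + 2) (by omega)]
            have hprod : ∏ j ∈ Finset.Icc 1 (p + 2 - 1), fac (lam j)
                = ∏ j ∈ Finset.Icc 1 (p + 1), fac ((S N N0 ε x j).1) := by
              apply Finset.prod_congr rfl
              intro j hj'
              rw [ih j (Finset.mem_Icc.mp hj').2 (Finset.mem_Icc.mp hj').1]
            rw [hprod, ← S_snd_eq_prod]
            rfl
  intro k hk
  exact main k k le_rfl hk

lemma S_snd_mem (N N0 : ℕ) (ε : ℝ) {x : ℝ} (hx : x ∈ Set.Ioo (0 : ℝ) 1) :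
    ∀ k, 0 < (S N N0 ε x (k + 2)).2 ∧ (S N N0 ε x (k + 2)).2 < 1 := by
  intro k
  induction k with
  | zero =>
      show 0 < (S N N0 ε x 1).2 * fac ((S N N0 ε x 1).1) ∧
        (S N N0 ε x 1).2 * fac ((S N N0 ε x 1).1) < 1
      show 0 < (1 : ℝ) * fac x ∧ (1 : ℝ) * fac x < 1
      rw [one_mul]
      exact ⟨fac_pos x, fac_lt_one hx.1⟩
  | succ m ih =>
      show 0 < (S N N0 ε x (m + 2)).2 * fac ((S N N0 ε x (m + 2)).1) ∧
        (S N N0 ε x (m + 2)).2 * fac ((S N N0 ε x (m + 2)).1) < 1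
      constructor
      · exact mul_pos ih.1 (fac_pos _)
      · have h1 := fac_le_one ((S N N0 ε x (m + 2)).1)
        have h2 := fac_pos ((S N N0 ε x (m + 2)).1)
        nlinarith [ih.1, ih.2]

lemma S_fst_pos (N N0 : ℕ) (hN : 2 ≤ N) (hN0 : 1 ≤ N0) (hN0N : N0 ≤ N)
    {ε : ℝ} (hε : 0 < ε) {x : ℝ} (hx : x ∈ Set.Ioo (0 : ℝ) 1) :
    ∀ k, 0 < (S N N0 ε x (k + 2)).1 := by
  intro k
  have hq := S_snd_mem N N0 ε hx k
  show 0 < gfun N N0 ε (k + 2) ((S N N0 ε x (k + 2)).2)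
  unfold gfun
  apply Real.rpow_pos_of_pos
  have hlt := witnessSum_lt N N0 hN hN0 hN0N hq.1.le hq.2
  rw [witnessSum_one N N0 hN hN0N] at hlt
  have h1 : (0 : ℝ) < (2 : ℝ) ^ (N - 1) - 1 - witnessSum N N0 ((S N N0 ε x (k + 2)).2) := by
    linarith
  have h2 : (0 : ℝ) < (1 + ε) * (2 ^ (N0 * (k + 2 - 1)) / 2 ^ (N - 2)) := by positivity
  exact mul_pos h2 h1

lemma tendsto_S (N N0 : ℕ) (hN : 2 ≤ N) (hN0 : 1 ≤ N0) (hN0N : N0 ≤ N) (ε : ℝ) :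
    ∀ k, Tendsto (fun x => (S N N0 ε x k).1) (𝓝 0) (𝓝 0) ∧
      Tendsto (fun x => (S N N0 ε x k).2) (𝓝 0) (𝓝 1) := by
  intro k
  induction k using Nat.strong_induction_on with
  | _ k ih =>
    match k with
    | 0 => exact ⟨tendsto_id, tendsto_const_nhds⟩
    | 1 => exact ⟨tendsto_id, tendsto_const_nhds⟩
    | (m + 2) =>
      have IH := ih (m + 1) (by omega)
      have hQ : Tendsto (fun x => (S N N0 ε x (m + 2)).2) (𝓝 0) (𝓝 1) := by
        have : Tendsto (fun x => (S N N0 ε x (m + 1)).2 * fac ((S N N0 ε x (m + 1)).1))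
            (𝓝 0) (𝓝 (1 * fac 0)) :=
          IH.2.mul ((fac_continuous.tendsto 0).comp IH.1)
        rw [fac_zero, one_mul] at this
        exact this
      refine ⟨?_, hQ⟩
      have hInner : Tendsto (fun x => (1 + ε) * (2 ^ (N0 * (m + 2 - 1)) / 2 ^ (N - 2)) *
          ((2 : ℝ) ^ (N - 1) - 1 - witnessSum N N0 ((S N N0 ε x (m + 2)).2)))
          (𝓝 0) (𝓝 0) := by
        have h1 : Tendsto (fun x => witnessSum N N0 ((S N N0 ε x (m + 2)).2))
            (𝓝 0) (𝓝 (witnessSum N N0 1)) :=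
          ((witnessSum_continuous N N0).tendsto 1).comp hQ
        have h2 := (tendsto_const_nhds (x := (2 : ℝ) ^ (N - 1) - 1)
          (f := 𝓝 (0 : ℝ))).sub h1
        rw [witnessSum_one N N0 hN hN0N, sub_self] at h2
        have h3 := (tendsto_const_nhds
          (x := (1 + ε) * (2 ^ (N0 * (m + 2 - 1)) / 2 ^ (N - 2) : ℝ))
          (f := 𝓝 (0 : ℝ))).mul h2
        rw [mul_zero] at h3
        exact h3
      have := hInner.rpow_const (p := (1 : ℝ) / N0) (Or.inr (by positivity))
      rw [Real.zero_rpow (by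
        have : (N0 : ℝ) ≠ 0 := by exact_mod_cast (by omega : N0 ≠ 0)
        simp [this])] at this
      exact this

end GMEAux

open GMEAux in
/-- Unbounded sequential detection of GME for the GHZ state, for every level `N0`
of the recycling hierarchy: for every `K` there is an initial sharpness `λ₁ ∈ (0,1)`
such that the recursively defined sharpness parameters stay in `(0,1)` up to step `K`. -/
theorem unbounded_sequential_GME (N N0 : ℕ) (hN : 2 ≤ N) (hN0 : 1 ≤ N0) (hN0N : N0 ≤ N)
    (ε : ℝ) (hε : 0 < ε) :
    ∀ K : ℕ, ∃ l1 ∈ Set.Ioo (0 : ℝ) 1, ∀ lam : ℕ → ℝ,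
      lam 1 = l1 →
      (∀ k : ℕ, 2 ≤ k →
        lam k = ((1 + ε) * (2 ^ (N0 * (k - 1)) / 2 ^ (N - 2)) *
            ((2 : ℝ) ^ (N - 1) - 1 -
              witnessSum N N0
                (∏ j ∈ Finset.Icc 1 (k - 1), (1 + Real.sqrt (1 - lam j ^ 2)) / 2))) ^
          ((1 : ℝ) / N0)) →
      ∀ k : ℕ, 1 ≤ k → k ≤ K → lam k ∈ Set.Ioo (0 : ℝ) 1 := by
  intro K
  have hT := tendsto_S N N0 hN hN0 hN0N ε
  have h1 : ∀ᶠ x in 𝓝[>] (0 : ℝ), ∀ k ∈ Finset.Icc 1 K, (S N N0 ε x k).1 < 1 := by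
    rw [Filter.eventually_all_finset]
    intro k _
    exact (((hT k).1).mono_left nhdsWithin_le_nhds).eventually_lt_const one_pos
  have h2 : ∀ᶠ x in 𝓝[>] (0 : ℝ), x ∈ Set.Ioo (0 : ℝ) 1 :=
    Filter.eventually_of_mem (Ioo_mem_nhdsGT_of_mem ⟨le_refl 0, one_pos⟩) fun x hx => hx
  obtain ⟨x, hx1, hx2⟩ := (h1.and h2).exists
  refine ⟨x, hx2, ?_⟩
  intro lam hlam1 hrec k hk1 hkK
  have hrec' : ∀ k, 2 ≤ k →
      lam k = gfun N N0 ε k (∏ j ∈ Finset.Icc 1 (k - 1), fac (lam j)) := hrec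
  have heq := lam_eq N N0 ε x lam hlam1 hrec'
  rw [heq k hk1]
  rcases Nat.lt_or_ge k 2 with h | h
  · interval_cases k
    exact hx2
  · obtain ⟨m, hm⟩ : ∃ m, k = m + 2 := ⟨k - 2, by omega⟩
    subst hm
    refine ⟨S_fst_pos N N0 hN hN0 hN0N hε hx2 m, ?_⟩
    exact hx1 (m + 2) (Finset.mem_Icc.mpr ⟨by omega, hkK⟩)
end

section
/- For naturals N ≥ 2, 1 ≤ N0 ≤ N, and real Q ∈ [0,1), the quantity 2^{N−1} − 1 − f(Q) is strictly positive, where f(Q) = Σ_{θ=1}^{⌊N/2⌋} Σ_{t=max(0,2θ−N0)}^{min(2θ,N−N0)} C(N0,2θ−t)·C(N−N0,t)·Q^{2θ−t}. -/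
open Finset

lemma vandermonde_range (a b k : ℕ) :
    ∑ t ∈ Finset.range (k + 1), a.choose (k - t) * b.choose t = (a + b).choose k := by
  rw [Nat.add_choose_eq,
    Finset.Nat.sum_antidiagonal_eq_sum_range_succ (fun i j => a.choose i * b.choose j) k]
  apply Finset.sum_nbij' (fun t => k - t) (fun i => k - i)
  · intro t ht; simp only [mem_range] at ht ⊢; omega
  · intro i hi; simp only [mem_range] at hi ⊢; omega
  · intro t ht; simp only [mem_range] at ht; omega
  · intro i hi; simp only [mem_range] at hi; omega
  · intro t ht; simp only [mem_range] at ht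
    have h1 : k - (k - t) = t := by omega
    rw [h1]

lemma even_choose_sum (N : ℕ) (hN : 1 ≤ N) :
    ∑ θ ∈ Finset.range (N / 2 + 1), (N.choose (2 * θ) : ℤ) = 2 ^ (N - 1) := by
  have h1 : ∑ k ∈ range (N + 1), (-1 : ℤ) ^ k * N.choose k = 0 :=
    Int.alternating_sum_range_choose_of_ne (by omega)
  have h2 : ∑ k ∈ range (N + 1), (N.choose k : ℤ) = 2 ^ N := by
    exact_mod_cast congrArg (Nat.cast : ℕ → ℤ) (Nat.sum_range_choose N)
  have h3 : ∑ k ∈ range (N + 1), ((-1 : ℤ) ^ k + 1) * N.choose k = 2 ^ N := by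
    simp_rw [add_mul, one_mul, Finset.sum_add_distrib, h1, h2, zero_add]
  have h4 : ∑ k ∈ range (N + 1), ((-1 : ℤ) ^ k + 1) * N.choose k
      = ∑ k ∈ (range (N + 1)).filter (fun k => Even k), 2 * (N.choose k : ℤ) := by
    rw [Finset.sum_filter]
    apply Finset.sum_congr rfl
    intro k _
    rcases Nat.even_or_odd k with h | h
    · rw [if_pos h, h.neg_one_pow]; ring
    · rw [if_neg (by simpa [Nat.even_iff] using Nat.odd_iff.mp h), h.neg_one_pow]; ring
  have h5 : ∑ k ∈ (range (N + 1)).filter (fun k => Even k), 2 * (N.choose k : ℤ)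
      = ∑ θ ∈ Finset.range (N / 2 + 1), 2 * (N.choose (2 * θ) : ℤ) := by
    apply Finset.sum_nbij' (fun k => k / 2) (fun θ => 2 * θ)
    · intro k hk; simp only [mem_filter, mem_range] at hk ⊢; omega
    · intro θ hθ; simp only [mem_filter, mem_range] at hθ ⊢
      exact ⟨by omega, ⟨θ, by ring⟩⟩
    · intro k hk; simp only [mem_filter, mem_range, Nat.even_iff] at hk; omega
    · intro θ _; omega
    · intro k hk; simp only [mem_filter, mem_range, Nat.even_iff] at hk
      have h : 2 * (k / 2) = k := by omega
      rw [h]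
  have h6 : 2 * ∑ θ ∈ Finset.range (N / 2 + 1), (N.choose (2 * θ) : ℤ) = 2 * 2 ^ (N - 1) := by
    rw [Finset.mul_sum, ← h5, ← h4, h3, ← pow_succ']
    congr 1
    omega
  linarith

lemma witness_bracket_pos_aux (N N0 : ℕ) (hN : 2 ≤ N) (hN0 : 1 ≤ N0) (hN0N : N0 ≤ N)
    (Q : ℝ) (hQ : Q ∈ Set.Ico (0 : ℝ) 1) :
    0 < (2 : ℝ) ^ (N - 1) - 1 - (∑ θ ∈ Finset.Icc 1 (N / 2),
    ∑ t ∈ Finset.Icc (2 * θ - N0) (min (2 * θ) (N - N0)),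
      (Nat.choose N0 (2 * θ - t) : ℝ) * (Nat.choose (N - N0) t : ℝ) * Q ^ (2 * θ - t)) := by
  obtain ⟨hQ0, hQ1⟩ := hQ
  -- Step 1: extend inner sums to full range
  have hext : ∀ θ ∈ Finset.Icc 1 (N / 2),
      (∑ t ∈ Finset.Icc (2 * θ - N0) (min (2 * θ) (N - N0)),
        (Nat.choose N0 (2 * θ - t) : ℝ) * (Nat.choose (N - N0) t : ℝ) * Q ^ (2 * θ - t))
      ≤ ∑ t ∈ Finset.range (2 * θ + 1),
        (Nat.choose N0 (2 * θ - t) : ℝ) * (Nat.choose (N - N0) t : ℝ) * Q ^ (2 * θ - t) := by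
    intro θ _
    apply Finset.sum_le_sum_of_subset_of_nonneg
    · intro t ht
      simp only [Finset.mem_Icc, Finset.mem_range] at ht ⊢
      omega
    · intro t _ _
      positivity
  -- Step 2: each extended inner sum ≤ binomial, strict for θ = 1
  have hle : ∀ θ ∈ Finset.Icc 1 (N / 2),
      (∑ t ∈ Finset.range (2 * θ + 1),
        (Nat.choose N0 (2 * θ - t) : ℝ) * (Nat.choose (N - N0) t : ℝ) * Q ^ (2 * θ - t))
      ≤ (N.choose (2 * θ) : ℝ) := by
    intro θ _
    have : ((N.choose (2 * θ) : ℕ) : ℝ)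
        = ∑ t ∈ Finset.range (2 * θ + 1),
          (Nat.choose N0 (2 * θ - t) : ℝ) * (Nat.choose (N - N0) t : ℝ) := by
      rw [show N = N0 + (N - N0) by omega, ← vandermonde_range]
      push_cast
      simp [Nat.add_sub_cancel_left]
    rw [this]
    apply Finset.sum_le_sum
    intro t _
    have h1 : Q ^ (2 * θ - t) ≤ 1 :=
      pow_le_one₀ hQ0 (le_of_lt hQ1)
    have h2 : (0:ℝ) ≤ (Nat.choose N0 (2 * θ - t) : ℝ) * (Nat.choose (N - N0) t : ℝ) := by
      positivity
    nlinarith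
  have hstrict : (∑ t ∈ Finset.range (2 * 1 + 1),
        (Nat.choose N0 (2 * 1 - t) : ℝ) * (Nat.choose (N - N0) t : ℝ) * Q ^ (2 * 1 - t))
      < (N.choose (2 * 1) : ℝ) := by
    have hvdm : ((N.choose 2 : ℕ) : ℝ)
        = ∑ t ∈ Finset.range 3,
          (Nat.choose N0 (2 - t) : ℝ) * (Nat.choose (N - N0) t : ℝ) := by
      rw [show N = N0 + (N - N0) by omega, ← vandermonde_range]
      push_cast
      simp [Nat.add_sub_cancel_left]
    simp only [show 2 * 1 = 2 from rfl]
    rw [hvdm]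
    apply Finset.sum_lt_sum
    · intro t _
      have h1 : Q ^ (2 - t) ≤ 1 := pow_le_one₀ hQ0 (le_of_lt hQ1)
      have h2 : (0:ℝ) ≤ (Nat.choose N0 (2 - t) : ℝ) * (Nat.choose (N - N0) t : ℝ) := by
        positivity
      nlinarith
    · -- strict term: t = 0 if N0 ≥ 2, t = 1 if N0 = 1
      rcases Nat.lt_or_ge N0 2 with h2 | h2
      · have hN0' : N0 = 1 := by omega
        refine ⟨1, by simp, ?_⟩
        have hcn : 0 < Nat.choose N0 (2 - 1) * Nat.choose (N - N0) 1 := by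
          subst hN0'
          simp only [Nat.choose_one_right]
          have : 0 < N - 1 := by omega
          simpa using this
        have hc : (0:ℝ) < (Nat.choose N0 (2 - 1) : ℝ) * (Nat.choose (N - N0) 1 : ℝ) := by
          exact_mod_cast Nat.cast_pos.mpr hcn
        have hq : Q ^ (2 - 1) < 1 := by simpa using hQ1
        nlinarith
      · refine ⟨0, by simp, ?_⟩
        have hc : (0:ℝ) < (Nat.choose N0 (2 - 0) : ℝ) * (Nat.choose (N - N0) 0 : ℝ) := by
          simp only [Nat.choose_zero_right, Nat.cast_one, mul_one]
          exact_mod_cast Nat.choose_pos h2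
        have hq : Q ^ (2 - 0) < 1 := by
          have := pow_lt_one₀ hQ0 hQ1 (two_ne_zero)
          simpa using this
        nlinarith
  -- Step 3: combine
  have h1mem : 1 ∈ Finset.Icc 1 (N / 2) := by
    simp only [Finset.mem_Icc]
    omega
  have hsum_lt : (∑ θ ∈ Finset.Icc 1 (N / 2),
      ∑ t ∈ Finset.Icc (2 * θ - N0) (min (2 * θ) (N - N0)),
        (Nat.choose N0 (2 * θ - t) : ℝ) * (Nat.choose (N - N0) t : ℝ) * Q ^ (2 * θ - t))
      < ∑ θ ∈ Finset.Icc 1 (N / 2), (N.choose (2 * θ) : ℝ) := by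
    apply Finset.sum_lt_sum
    · intro θ hθ
      exact le_trans (hext θ hθ) (hle θ hθ)
    · exact ⟨1, h1mem, lt_of_le_of_lt (hext 1 h1mem) hstrict⟩
  -- Step 4: evaluate the binomial sum
  have hbinom : ∑ θ ∈ Finset.Icc 1 (N / 2), (N.choose (2 * θ) : ℝ) = 2 ^ (N - 1) - 1 := by
    have hcast : ∑ θ ∈ Finset.Icc 1 (N / 2), (N.choose (2 * θ) : ℤ) = 2 ^ (N - 1) - 1 := by
      have := even_choose_sum N (by omega)
      have hsplit : ∑ θ ∈ Finset.range (N / 2 + 1), (N.choose (2 * θ) : ℤ)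
          = (N.choose 0 : ℤ) + ∑ θ ∈ Finset.Icc 1 (N / 2), (N.choose (2 * θ) : ℤ) := by
        have hins : Finset.range (N / 2 + 1) = insert 0 (Finset.Icc 1 (N / 2)) := by
          ext x; simp only [Finset.mem_range, Finset.mem_insert, Finset.mem_Icc]; omega
        rw [hins, Finset.sum_insert (by simp)]
      rw [hsplit] at this
      simp only [Nat.choose_zero_right, Nat.cast_one] at this
      omega
    exact_mod_cast congrArg (Int.cast : ℤ → ℝ) hcast
  linarith [hsum_lt, hbinom]

/-- For `Q ∈ [0,1)` the witness bracket `2^(N-1) - 1 - f(Q)` is strictly positive. -/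
theorem witness_bracket_pos (N N0 : ℕ) (hN : 2 ≤ N) (hN0 : 1 ≤ N0) (hN0N : N0 ≤ N)
    (Q : ℝ) (hQ : Q ∈ Set.Ico (0 : ℝ) 1) :
    0 < (2 : ℝ) ^ (N - 1) - 1 - witnessSum N N0 Q := by
  unfold witnessSum
  exact witness_bracket_pos_aux N N0 hN hN0 hN0N Q hQ
end

section
/- Fix N ≥ 2, 1 ≤ N0 ≤ N, ε > 0, p₁ ∈ (0,1], a ∈ (0,1/2], and set c = p₁·√(a(1−a)). Define the recursive sequence λ_k with Q_k = ∏_{j<k}(1+√(1−λ_j²))/2 and λ_k^{N0} = (1+ε)·(2^{N0(k−1)}/(2^{N−2}·c))·(2^{N−1} − 1 − f(Q_k)), where f is the witness sum. Then for every K ∈ ℕ there exists λ_1 ∈ (0,1) such that λ_k ∈ (0,1) for all k ≤ K. -/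
open Finset

lemma vandermonde_inner (N N0 : ℕ) (hN0N : N0 ≤ N) (θ : ℕ) :
    ∑ t ∈ Icc (2 * θ - N0) (min (2 * θ) (N - N0)),
      N0.choose (2 * θ - t) * (N - N0).choose t = N.choose (2 * θ) := by
  have hsub : Icc (2 * θ - N0) (min (2 * θ) (N - N0)) ⊆ range (2 * θ + 1) := by
    intro t ht
    simp only [mem_Icc, mem_range] at *
    omega
  rw [Finset.sum_subset hsub]
  · have h1 : N.choose (2 * θ) = ((N - N0) + N0).choose (2 * θ) := by
      rw [Nat.sub_add_cancel hN0N]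
    rw [h1, Nat.add_choose_eq,
      Finset.Nat.sum_antidiagonal_eq_sum_range_succ
        (fun a b => (N - N0).choose a * N0.choose b)]
    apply Finset.sum_congr rfl
    intro t _
    ring
  · intro t ht hnot
    simp only [mem_Icc, mem_range] at *
    have : N0 < 2 * θ - t ∨ N - N0 < t := by omega
    rcases this with h | h
    · rw [Nat.choose_eq_zero_of_lt h, zero_mul]
    · rw [Nat.choose_eq_zero_of_lt h, mul_zero]

lemma sum_even_choose (N : ℕ) (hN : 2 ≤ N) :
    ∑ θ ∈ Icc 1 (N / 2), (N.choose (2 * θ) : ℝ) = 2 ^ (N - 1) - 1 := by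
  have himg : (range (N / 2 + 1)).image (fun θ => 2 * θ) = (range (N + 1)).filter Even := by
    ext i
    simp only [mem_image, mem_filter, mem_range, Nat.even_iff]
    constructor
    · rintro ⟨θ, hθ, rfl⟩; omega
    · rintro ⟨hi, he⟩; exact ⟨i / 2, by omega, by omega⟩
  have h1 : ∑ i ∈ range (N + 1), (N.choose i : ℝ) = 2 ^ N := by
    rw [← Nat.cast_sum, Nat.sum_range_choose]
    push_cast; ring
  have h2 : ∑ i ∈ range (N + 1), (-1 : ℝ) ^ i * (N.choose i : ℝ) = 0 := by
    have := Int.alternating_sum_range_choose_of_ne (n := N) (by omega)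
    have := congrArg (fun z : ℤ => (z : ℝ)) this
    push_cast at this
    simpa using this
  have h3 : ∑ θ ∈ range (N / 2 + 1), (N.choose (2 * θ) : ℝ) = 2 ^ (N - 1) := by
    have hinj : ∀ x ∈ range (N / 2 + 1), ∀ y ∈ range (N / 2 + 1),
        2 * x = 2 * y → x = y := by intro x _ y _ h; omega
    have := Finset.sum_image (f := fun i => (N.choose i : ℝ)) (g := fun θ => 2 * θ) hinj
    rw [himg] at this
    rw [← this]
    have hfe : ∑ i ∈ (range (N + 1)).filter Even, (N.choose i : ℝ)
        = ∑ i ∈ range (N + 1), ((N.choose i : ℝ) + (-1 : ℝ) ^ i * N.choose i) / 2 := by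
      rw [Finset.sum_filter]
      apply Finset.sum_congr rfl
      intro i _
      rcases Nat.even_or_odd i with he | ho
      · rw [if_pos he, he.neg_one_pow]; ring
      · rw [if_neg (by simpa using ho), ho.neg_one_pow]; ring
    rw [hfe, ← Finset.sum_div, Finset.sum_add_distrib, h1, h2]
    have : (2 : ℝ) ^ N = 2 ^ (N - 1) * 2 := by
      rw [← pow_succ]; congr 1; omega
    rw [this]; ring
  have hins : insert 0 (Icc 1 (N / 2)) = range (N / 2 + 1) := by
    ext i; simp only [mem_insert, mem_Icc, mem_range]; omega
  have h0 : (0 : ℕ) ∉ Icc 1 (N / 2) := by simp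
  have := Finset.sum_insert (f := fun θ => (N.choose (2 * θ) : ℝ)) h0
  rw [hins, h3] at this
  simp only [mul_zero, Nat.choose_zero_right, Nat.cast_one] at this
  linarith

lemma witnessSum_one (N N0 : ℕ) (hN : 2 ≤ N) (hN0N : N0 ≤ N) :
    witnessSum N N0 1 = 2 ^ (N - 1) - 1 := by
  unfold witnessSum
  rw [← sum_even_choose N hN]
  apply Finset.sum_congr rfl
  intro θ _
  rw [← vandermonde_inner N N0 hN0N θ]
  push_cast
  apply Finset.sum_congr rfl
  intro t _
  rw [one_pow, mul_one]

lemma witnessSum_lt (N N0 : ℕ) (hN : 2 ≤ N) (hN0 : 1 ≤ N0) (hN0N : N0 ≤ N)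
    {Q : ℝ} (hQ0 : 0 ≤ Q) (hQ1 : Q < 1) :
    witnessSum N N0 Q < 2 ^ (N - 1) - 1 := by
  rw [← witnessSum_one N N0 hN hN0N]
  unfold witnessSum
  apply Finset.sum_lt_sum
  · intro θ _
    apply Finset.sum_le_sum
    intro t _
    have h1 : Q ^ (2 * θ - t) ≤ 1 := pow_le_one₀ hQ0 hQ1.le
    have h2 : (0 : ℝ) ≤ (N0.choose (2 * θ - t) : ℝ) * ((N - N0).choose t : ℝ) := by positivity
    calc (N0.choose (2 * θ - t) : ℝ) * ((N - N0).choose t : ℝ) * Q ^ (2 * θ - t)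
        ≤ (N0.choose (2 * θ - t) : ℝ) * ((N - N0).choose t : ℝ) * 1 := by
          exact mul_le_mul_of_nonneg_left h1 h2
      _ = (N0.choose (2 * θ - t) : ℝ) * ((N - N0).choose t : ℝ) * 1 ^ (2 * θ - t) := by
          rw [one_pow]
  · refine ⟨1, by simp [Finset.mem_Icc]; omega, ?_⟩
    apply Finset.sum_lt_sum
    · intro t _
      have h1 : Q ^ (2 * 1 - t) ≤ 1 ^ (2 * 1 - t) := by
        rw [one_pow]; exact pow_le_one₀ hQ0 hQ1.le
      have h2 : (0 : ℝ) ≤ (N0.choose (2 * 1 - t) : ℝ) * ((N - N0).choose t : ℝ) := by positivity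
      exact mul_le_mul_of_nonneg_left h1 h2
    · rcases Nat.lt_or_ge N0 2 with h2 | h2
      · -- N0 = 1, take t = 1
        have hN0eq : N0 = 1 := by omega
        refine ⟨1, ?_, ?_⟩
        · simp [Finset.mem_Icc]; omega
        · have he : 2 * 1 - 1 = 1 := by norm_num
          rw [he, hN0eq]
          simp only [Nat.choose_self, Nat.cast_one, one_mul]
          have hc : (0 : ℝ) < ((N - 1).choose 1 : ℝ) := by
            have : 1 ≤ N - 1 := by omega
            exact_mod_cast Nat.choose_pos this
          have : Q ^ 1 < 1 ^ 1 := by simpa using hQ1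
          nlinarith [this, hc]
      · -- N0 ≥ 2, take t = 0
        refine ⟨0, ?_, ?_⟩
        · simp [Finset.mem_Icc]; omega
        · have he : 2 * 1 - 0 = 2 := by norm_num
          rw [he]
          simp only [Nat.choose_zero_right, Nat.cast_one, mul_one]
          have hc : (0 : ℝ) < (N0.choose 2 : ℝ) := by exact_mod_cast Nat.choose_pos h2
          have hq : Q ^ 2 < 1 ^ 2 := by
            rw [one_pow]; exact pow_lt_one₀ hQ0 hQ1 (by norm_num)
          rw [one_pow]
          nlinarith [hq, hc]

noncomputable def gfac (x : ℝ) : ℝ := (1 + Real.sqrt (1 - x ^ 2)) / 2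

noncomputable def gstep (N N0 : ℕ) (ε c : ℝ) (k : ℕ) (p : ℝ × ℝ) : ℝ × ℝ :=
  (((1 + ε) * (2 ^ (N0 * k) / (2 ^ (N - 2) * c)) *
      ((2 : ℝ) ^ (N - 1) - 1 - witnessSum N N0 (p.2 * gfac p.1))) ^ ((1 : ℝ) / N0),
    p.2 * gfac p.1)

noncomputable def gseq (N N0 : ℕ) (ε c l1 : ℝ) : ℕ → ℝ × ℝ
  | 0 => (l1, 1)
  | (k + 1) => gstep N N0 ε c (k + 1) (gseq N N0 ε c l1 k)

lemma gseq_snd (N N0 : ℕ) (ε c l1 : ℝ) (k : ℕ) :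
    (gseq N N0 ε c l1 k).2 = ∏ j ∈ Icc 1 k, gfac ((gseq N N0 ε c l1 (j - 1)).1) := by
  induction k with
  | zero => simp [gseq]
  | succ k ih =>
    rw [Finset.prod_Icc_succ_top (by omega : 1 ≤ k + 1), ← ih]
    simp [gseq, gstep]

lemma gseq_fst (N N0 : ℕ) (ε c l1 : ℝ) (m : ℕ) :
    (gseq N N0 ε c l1 (m + 1)).1 =
      ((1 + ε) * (2 ^ (N0 * (m + 1)) / (2 ^ (N - 2) * c)) *
        ((2 : ℝ) ^ (N - 1) - 1 - witnessSum N N0 ((gseq N N0 ε c l1 (m + 1)).2))) ^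
        ((1 : ℝ) / N0) := rfl

lemma gfac_zero : gfac 0 = 1 := by
  simp [gfac]

lemma gseq_zero (N N0 : ℕ) (hN : 2 ≤ N) (hN0 : 1 ≤ N0) (hN0N : N0 ≤ N) (ε c : ℝ) (k : ℕ) :
    gseq N N0 ε c 0 k = (0, 1) := by
  induction k with
  | zero => rfl
  | succ k ih =>
    show gstep N N0 ε c (k + 1) (gseq N N0 ε c 0 k) = (0, 1)
    rw [ih]
    unfold gstep
    simp only [gfac_zero, mul_one]
    rw [witnessSum_one N N0 hN hN0N]
    simp only [sub_self, mul_zero]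
    rw [Real.zero_rpow (by positivity : (1 : ℝ) / N0 ≠ 0)]

lemma witnessSum_continuous (N N0 : ℕ) : Continuous (witnessSum N N0) := by
  unfold witnessSum
  apply continuous_finset_sum
  intro θ _
  apply continuous_finset_sum
  intro t _
  fun_prop

lemma gseq_continuous (N N0 : ℕ) (hN0 : 1 ≤ N0) (ε c : ℝ) (k : ℕ) :
    Continuous (fun l1 => gseq N N0 ε c l1 k) := by
  induction k with
  | zero => exact continuous_id.prodMk continuous_const
  | succ k ih =>
    have hg : Continuous (gstep N N0 ε c (k + 1)) := by
      unfold gstep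
      have hfac : Continuous (fun p : ℝ × ℝ => p.2 * gfac p.1) := by
        unfold gfac; fun_prop
      apply Continuous.prodMk
      · apply (Real.continuous_rpow_const (by positivity : (0:ℝ) ≤ 1 / N0)).comp
        exact (continuous_const.mul ((continuous_const.sub
          ((witnessSum_continuous N N0).comp hfac))))
      · exact hfac
    exact hg.comp ih

/-- Unbounded sequential detection of GME for the mixed generalized-GHZ family:
with `c = p₁√(a(1-a))`, for every `K` there is an initial sharpness `λ₁ ∈ (0,1)`
such that the recursively defined sharpness parameters stay in `(0,1)` up to step `K`. -/
theorem unbounded_sequential_GME_mixed (N N0 : ℕ) (hN : 2 ≤ N) (hN0 : 1 ≤ N0)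
    (hN0N : N0 ≤ N) (ε : ℝ) (hε : 0 < ε) (p₁ a : ℝ) (hp₁ : p₁ ∈ Set.Ioc (0 : ℝ) 1)
    (ha : a ∈ Set.Ioc (0 : ℝ) (1 / 2)) :
    ∀ K : ℕ, ∃ l1 ∈ Set.Ioo (0 : ℝ) 1, ∀ lam : ℕ → ℝ,
      lam 1 = l1 →
      (∀ k : ℕ, 2 ≤ k →
        lam k = ((1 + ε) * (2 ^ (N0 * (k - 1)) / (2 ^ (N - 2) * (p₁ * Real.sqrt (a * (1 - a))))) *
            ((2 : ℝ) ^ (N - 1) - 1 -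
              witnessSum N N0
                (∏ j ∈ Finset.Icc 1 (k - 1), (1 + Real.sqrt (1 - lam j ^ 2)) / 2))) ^
          ((1 : ℝ) / N0)) →
      ∀ k : ℕ, 1 ≤ k → k ≤ K → lam k ∈ Set.Ioo (0 : ℝ) 1 := by
  intro K
  set c : ℝ := p₁ * Real.sqrt (a * (1 - a)) with hc
  have hc0 : 0 < c := by
    apply mul_pos hp₁.1
    apply Real.sqrt_pos.mpr
    have h1 := ha.1
    have h2 := ha.2
    nlinarith
  -- eventually all components < 1
  have hev : ∀ᶠ l1 in nhds (0 : ℝ), ∀ k ∈ Finset.range (K + 1),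
      (gseq N N0 ε c l1 k).1 < 1 := by
    rw [Finset.eventually_all]
    intro k _
    have hcont : Continuous (fun l1 => (gseq N N0 ε c l1 k).1) :=
      (continuous_fst).comp (gseq_continuous N N0 hN0 ε c k)
    have htend : Filter.Tendsto (fun l1 => (gseq N N0 ε c l1 k).1) (nhds 0)
        (nhds ((gseq N N0 ε c 0 k).1)) := hcont.tendsto 0
    rw [gseq_zero N N0 hN hN0 hN0N ε c k] at htend
    exact htend.eventually_lt_const one_pos
  obtain ⟨δ, hδ0, hδ⟩ := Metric.eventually_nhds_iff.mp hev
  set l1 : ℝ := min δ 1 / 2 with hl1def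
  have hl10 : 0 < l1 := by positivity
  have hl11 : l1 < 1 := by
    have : min δ 1 ≤ 1 := min_le_right _ _
    rw [hl1def]; linarith
  have hl1δ : dist l1 0 < δ := by
    rw [Real.dist_eq, sub_zero, abs_of_pos hl10]
    have : min δ 1 ≤ δ := min_le_left _ _
    rw [hl1def]; linarith
  have hlt : ∀ m ≤ K, (gseq N N0 ε c l1 m).1 < 1 := by
    intro m hm
    exact hδ hl1δ m (Finset.mem_range.mpr (by omega))
  refine ⟨l1, ⟨hl10, hl11⟩, ?_⟩
  intro lam hlam1 hlamrec
  -- matching lemma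
  have hmatch : ∀ k, 1 ≤ k → lam k = (gseq N N0 ε c l1 (k - 1)).1 := by
    intro k
    induction k using Nat.strong_induction_on with
    | _ k ih =>
      intro hk1
      rcases eq_or_lt_of_le hk1 with h1 | h2
      · rw [← h1]
        simpa [gseq] using hlam1
      · have hk2 : 2 ≤ k := h2
        rw [hlamrec k hk2]
        have hprod : (∏ j ∈ Finset.Icc 1 (k - 1), (1 + Real.sqrt (1 - lam j ^ 2)) / 2)
            = (gseq N N0 ε c l1 (k - 1)).2 := by
          rw [gseq_snd]
          apply Finset.prod_congr rfl
          intro j hj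
          rw [Finset.mem_Icc] at hj
          rw [ih j (by omega) hj.1]
          rfl
        rw [hprod]
        obtain ⟨m, hm⟩ : ∃ m, k - 1 = m + 1 := ⟨k - 2, by omega⟩
        rw [hm, gseq_fst]
  -- positivity
  have hfacmem : ∀ x : ℝ, 0 < x → x < 1 → 0 < gfac x ∧ gfac x < 1 := by
    intro x hx0 hx1
    constructor
    · unfold gfac
      have := Real.sqrt_nonneg (1 - x ^ 2)
      linarith
    · unfold gfac
      have hlt : Real.sqrt (1 - x ^ 2) < 1 := by
        have h1 : 1 - x ^ 2 < 1 := by nlinarith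
        calc Real.sqrt (1 - x ^ 2) < Real.sqrt 1 :=
              Real.sqrt_lt_sqrt (by nlinarith) h1
          _ = 1 := Real.sqrt_one
      linarith
  have hpos : ∀ k, 1 ≤ k → k ≤ K → 0 < (gseq N N0 ε c l1 (k - 1)).1 := by
    intro k
    induction k using Nat.strong_induction_on with
    | _ k ih =>
      intro hk1 hkK
      rcases eq_or_lt_of_le hk1 with h1 | h2
      · rw [← h1]; simpa [gseq] using hl10
      · have hk2 : 2 ≤ k := h2
        obtain ⟨m, hm⟩ : ∃ m, k - 1 = m + 1 := ⟨k - 2, by omega⟩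
        rw [hm, gseq_fst]
        apply Real.rpow_pos_of_pos
        have hQ : 0 < (gseq N N0 ε c l1 (m + 1)).2 ∧ (gseq N N0 ε c l1 (m + 1)).2 < 1 := by
          rw [gseq_snd]
          have hmem : ∀ j ∈ Finset.Icc 1 (m + 1),
              0 < gfac ((gseq N N0 ε c l1 (j - 1)).1) ∧
                gfac ((gseq N N0 ε c l1 (j - 1)).1) < 1 := by
            intro j hj
            rw [Finset.mem_Icc] at hj
            have hjk : j < k := by omega
            have hjK : j ≤ K := by omega
            have hjpos := ih j hjk hj.1 hjK
            have hjlt : (gseq N N0 ε c l1 (j - 1)).1 < 1 := hlt (j - 1) (by omega)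
            exact hfacmem _ hjpos hjlt
          constructor
          · exact Finset.prod_pos (fun j hj => (hmem j hj).1)
          · calc (∏ j ∈ Finset.Icc 1 (m + 1), gfac ((gseq N N0 ε c l1 (j - 1)).1))
                < ∏ j ∈ Finset.Icc 1 (m + 1), 1 := by
                  apply Finset.prod_lt_prod_of_nonempty
                    (fun j hj => (hmem j hj).1) (fun j hj => (hmem j hj).2)
                  exact ⟨1, by simp⟩
              _ = 1 := Finset.prod_const_one
        have hgap : 0 < (2 : ℝ) ^ (N - 1) - 1 - witnessSum N N0 ((gseq N N0 ε c l1 (m + 1)).2) := by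
          have := witnessSum_lt N N0 hN hN0 hN0N hQ.1.le hQ.2
          linarith
        have hA : 0 < (1 + ε) * (2 ^ (N0 * (m + 1)) / (2 ^ (N - 2) * c)) := by positivity
        exact mul_pos hA hgap
  intro k hk1 hkK
  rw [hmatch k hk1]
  exact ⟨hpos k hk1 hkK, hlt (k - 1) (by omega)⟩
end
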